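/- For integer k ≥ 1, real c ≥ 0 and x ≥ 0, the sum Σ_{i=1}^k γ(i+c, x)/Γ(i) equals (γ(k+c+1, x) + x^(c+1) Γ(k, x)) / ((c+1) Γ(k)), where γ(s,x) = Γ(s) - Γ(s,x) is the lower incomplete Gamma function. -/

import Mathlib

/-!
Write `T k = γ(k + c + 1, x) + x^(c+1) Γ(k, x)`. The recurrences
`γ(s + 1, x) = s γ(s, x) - x^s e^(-x)` and `Γ(s + 1, x) = s Γ(s, x) + x^s e^(-x)` make the
boundary terms cancel in `T (k + 1) = k T k + (c + 1) γ(k + 1 + c, x)`, so that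
`(c + 1) γ(k + 1 + c, x) / k! = T (k + 1) / k! - T k / (k - 1)!` and the sum telescopes.
Writing `T k / (k - 1)!` as `k T k / k!` lets the induction start at the empty sum `k = 0`.
-/

open Real MeasureTheory Set Finset
open scoped Nat

/-- Upper incomplete Gamma function `Γ(s, x) = ∫_x^∞ z^(s-1) e^(-z) dz`. -/
noncomputable def uGamma (s x : ℝ) : ℝ := ∫ z in Set.Ioi x, z ^ (s - 1) * Real.exp (-z)

/-- Lower incomplete Gamma function `γ(s, x) = Γ(s) - Γ(s, x)`. -/
noncomputable def lGamma (s x : ℝ) : ℝ := Real.Gamma s - uGamma s x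

section Recurrences

variable {s x : ℝ}

lemma lGamma_eq_integral_Ioc (hs : 0 < s) (hx : 0 ≤ x) :
    lGamma s x = ∫ z in Ioc 0 x, z ^ (s - 1) * exp (-z) := by
  have hint : IntegrableOn (fun z : ℝ => z ^ (s - 1) * exp (-z)) (Ioi 0) := by
    simpa only [mul_comm] using GammaIntegral_convergent hs
  have hsplit := setIntegral_union (Ioc_disjoint_Ioi le_rfl) measurableSet_Ioi
    (hint.mono_set Ioc_subset_Ioi_self) (hint.mono_set (Ioi_subset_Ioi hx))
  rw [Ioc_union_Ioi_eq_Ioi hx] at hsplit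
  rw [lGamma, uGamma, Gamma_eq_integral hs]
  simp only [mul_comm (exp _)] at hsplit ⊢
  rw [hsplit, add_sub_cancel_right]

lemma lGamma_eq_re_partialGamma (hs : 0 < s) (hx : 0 ≤ x) :
    lGamma s x = (Complex.partialGamma s x).re := by
  have hintegrand : ∀ t ∈ Ioc (0 : ℝ) x,
      ((exp (-t) : ℝ) : ℂ) * (t : ℂ) ^ ((s : ℂ) - 1) = ((t ^ (s - 1) * exp (-t) : ℝ) : ℂ) := by
    intro t ht
    rw [← Complex.ofReal_one, ← Complex.ofReal_sub, ← Complex.ofReal_cpow ht.1.le,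
      ← Complex.ofReal_mul, mul_comm]
  rw [lGamma_eq_integral_Ioc hs hx, Complex.partialGamma, intervalIntegral.integral_of_le hx,
    setIntegral_congr_fun measurableSet_Ioc hintegrand, integral_complex_ofReal, Complex.ofReal_re]

lemma lGamma_add_one (hs : 0 < s) (hx : 0 ≤ x) :
    lGamma (s + 1) x = s * lGamma s x - x ^ s * exp (-x) := by
  have h := Complex.partialGamma_add_one (s := s) (by simpa using hs) hx
  rw [lGamma_eq_re_partialGamma (by linarith) hx, lGamma_eq_re_partialGamma hs hx,
    Complex.ofReal_add, Complex.ofReal_one, h, ← Complex.ofReal_cpow hx, ← Complex.ofReal_mul,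
    Complex.sub_re, Complex.re_ofReal_mul, Complex.ofReal_re, mul_comm (exp _)]

lemma uGamma_one (x : ℝ) : uGamma 1 x = exp (-x) := by
  simp only [uGamma, sub_self, rpow_zero, one_mul, integral_exp_neg_Ioi]

lemma uGamma_add_one (hs : 0 ≤ s) (hx : 0 ≤ x) :
    uGamma (s + 1) x = s * uGamma s x + x ^ s * exp (-x) := by
  rcases hs.eq_or_lt with rfl | hs
  · simp [uGamma_one]
  have h := lGamma_add_one hs hx
  rw [lGamma, lGamma, Gamma_add_one hs.ne'] at h
  linarith

end Recurrences

section Sum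

variable {c x : ℝ}

lemma lGamma_add_mul_uGamma_succ (hc : -1 < c) (hx : 0 ≤ x) (k : ℕ) :
    lGamma ((k + 1 : ℕ) + c + 1) x + x ^ (c + 1) * uGamma (k + 1 : ℕ) x
      = k * (lGamma (k + c + 1) x + x ^ (c + 1) * uGamma k x)
        + (c + 1) * lGamma ((k + 1 : ℕ) + c) x := by
  have hk : (0 : ℝ) ≤ k := k.cast_nonneg
  have hpow : x ^ (c + 1) * x ^ (k : ℝ) = x ^ ((k : ℝ) + c + 1) := by
    rw [← rpow_add' hx (by linarith : 0 < c + 1 + k).ne', add_comm (c + 1), add_assoc]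
  have hγ := lGamma_add_one (s := k + c + 1) (by linarith) hx
  have hΓ := uGamma_add_one (s := k) hk hx
  push_cast
  rw [add_right_comm _ 1 c, hγ, hΓ, ← hpow]
  ring

theorem mul_sum_Icc_lGamma_div_factorial (hc : -1 < c) (hx : 0 ≤ x) (k : ℕ) :
    (c + 1) * ∑ i ∈ Icc 1 k, lGamma (i + c) x / (i - 1)!
      = k * (lGamma (k + c + 1) x + x ^ (c + 1) * uGamma k x) / k ! := by
  induction k with
  | zero => simp
  | succ k ih =>
    rw [sum_Icc_succ_top (by omega), mul_add, ih, lGamma_add_mul_uGamma_succ hc hx,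
      Nat.add_sub_cancel, Nat.factorial_succ]
    push_cast
    field_simp

end Sum

theorem stmt4 (k : ℕ) (hk : 1 ≤ k) (c x : ℝ) (hc : 0 ≤ c) (hx : 0 ≤ x) :
    ∑ i ∈ Finset.Icc 1 k, lGamma ((i : ℝ) + c) x / (Nat.factorial (i - 1) : ℝ)
      = (lGamma ((k : ℝ) + c + 1) x + x ^ (c + 1) * uGamma k x)
          / ((c + 1) * (Nat.factorial (k - 1) : ℝ)) := by
  have hc1 : c + 1 ≠ 0 := by positivity
  have hk0 : (k : ℝ) ≠ 0 := Nat.cast_ne_zero.mpr (by omega)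
  have hfac : (k ! : ℝ) = k * (k - 1)! := by
    rw [← Nat.mul_factorial_pred (by omega : k ≠ 0), Nat.cast_mul]
  have h := mul_sum_Icc_lGamma_div_factorial (c := c) (by linarith) hx k
  rw [hfac, mul_div_mul_left _ _ hk0, mul_comm, ← eq_div_iff hc1, div_div] at h
  rw [h, mul_comm (c + 1)]
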